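/- For an admissible list L (every entry ≥ 2), d(L) − d'(L) = 3 if and only if L is either [2, 2, …, 2, 3, 2] (k ≥ 0 entries equal to 2, then 3, then 2) or [2, 2, …, 2, 4] (k ≥ 0 entries equal to 2, then 4). (This is the case α = 3 of the equation e(R) + α/d(R) = 1 for an oriented admissible chain R.) -/
import Mathlib


/-- The discriminant `d(L)` of a chain with weight list `L`, defined by the recursion
`d([]) = 1`, `d([a]) = a`, `d(a :: b :: L') = a * d(b :: L') - d(L')`. -/
def disc : List ℤ → ℤ
  | [] => 1
  | [a] => a
  | a :: b :: L => a * disc (b :: L) - disc L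

/-- `d'(L) = d(L.tail)` for nonempty `L`, and `d'([]) = 0`. -/
def disc' : List ℤ → ℤ
  | [] => 0
  | _ :: L => disc L

lemma disc_cons (a : ℤ) (T : List ℤ) : disc (a :: T) = a * disc T - disc' T := by
  cases T <;> simp [disc, disc']

lemma disc'_cons (a : ℤ) (T : List ℤ) : disc' (a :: T) = disc T := rfl

lemma disc_key (L : List ℤ) (hL : ∀ a ∈ L, 2 ≤ a) : disc' L < disc L ∧ 0 ≤ disc' L := by
  induction L with
  | nil => simp [disc, disc']
  | cons a T ih =>
    have ha : 2 ≤ a := hL a (by simp)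
    obtain ⟨h1, h2⟩ := ih (fun b hb => hL b (by simp [hb]))
    rw [disc_cons, disc'_cons]
    constructor
    · nlinarith
    · linarith

lemma disc_eq_one (L : List ℤ) (hL : ∀ a ∈ L, 2 ≤ a) (h : disc L = 1) : L = [] := by
  cases L with
  | nil => rfl
  | cons a T =>
    exfalso
    have ha : 2 ≤ a := hL a (by simp)
    obtain ⟨h1, h2⟩ := disc_key T (fun b hb => hL b (by simp [hb]))
    rw [disc_cons] at h
    nlinarith

lemma disc_eq_two (L : List ℤ) (hL : ∀ a ∈ L, 2 ≤ a) (h : disc L = 2) : L = [2] := by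
  cases L with
  | nil => simp [disc] at h
  | cons a T =>
    have ha : 2 ≤ a := hL a (by simp)
    have hT : ∀ b ∈ T, 2 ≤ b := fun b hb => hL b (by simp [hb])
    obtain ⟨h1, h2⟩ := disc_key T hT
    rw [disc_cons] at h
    have hd : disc T = 1 := by nlinarith
    have hnil := disc_eq_one T hT hd
    subst hnil
    simp [disc, disc'] at h
    simp [h]

lemma f_rep (k : ℕ) (X : List ℤ) :
    disc (List.replicate k 2 ++ X) - disc' (List.replicate k 2 ++ X) = disc X - disc' X := by
  induction k with
  | zero => simp
  | succ k ih =>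
    rw [List.replicate_succ, List.cons_append, disc_cons, disc'_cons]
    linarith

lemma forward_dir (L : List ℤ) (hL : ∀ a ∈ L, 2 ≤ a) (h : disc L - disc' L = 3) :
    ∃ k : ℕ, L = List.replicate k (2 : ℤ) ++ [3, 2] ∨
        L = List.replicate k (2 : ℤ) ++ [4] := by
  induction L with
  | nil => simp [disc, disc'] at h
  | cons a T ih =>
    have ha : 2 ≤ a := hL a (by simp)
    have hT : ∀ b ∈ T, 2 ≤ b := fun b hb => hL b (by simp [hb])
    obtain ⟨h1, h2⟩ := disc_key T hT
    rw [disc_cons, disc'_cons] at h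
    rcases ha.eq_or_lt with h2a | h3a
    · -- a = 2
      have hf : disc T - disc' T = 3 := by rw [← h2a] at h; linarith
      obtain ⟨k, hk⟩ := ih hT hf
      refine ⟨k + 1, ?_⟩
      rcases hk with hk | hk
      · left; rw [List.replicate_succ, List.cons_append, hk, ← h2a]
      · right; rw [List.replicate_succ, List.cons_append, hk, ← h2a]
    · have h3a : 3 ≤ a := h3a
      have hb : a ≤ 4 := by nlinarith
      interval_cases a
      · -- a = 3 : disc T = 2
        have hd : disc T = 2 := by nlinarith
        have := disc_eq_two T hT hd
        exact ⟨0, Or.inl (by simp [this])⟩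
      · -- a = 4 : disc T = 1
        have hd : disc T = 1 := by nlinarith
        have := disc_eq_one T hT hd
        exact ⟨0, Or.inr (by simp [this])⟩

theorem disc_sub_disc'_eq_three (L : List ℤ) (hL : ∀ a ∈ L, 2 ≤ a) :
    disc L - disc' L = 3 ↔
      ∃ k : ℕ, L = List.replicate k (2 : ℤ) ++ [3, 2] ∨
        L = List.replicate k (2 : ℤ) ++ [4] := by
  constructor
  · exact forward_dir L hL
  · rintro ⟨k, h | h⟩ <;> subst h <;> rw [f_rep] <;> simp [disc, disc']
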